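/- arXiv:2203.02328 — 2 statements merged into one kernel-verified Lean document; each statement's English description precedes it below -/
import Mathlib

section
/- Let d ≥ 1 be an integer, let J, A_1, …, A_d be finite sets, let S : J → ℝ_{≥0}, let δ : J × A_1 × ⋯ × A_d → {0, 1}, and for each 1 ≤ j ≤ d let s_j : J × A_j → ℝ_{≥0}. Suppose there are constants C ≥ 0 and M ≥ 0 such that (i) δ(p, a_1, …, a_d) · S(p)^d ≤ C · ∏_{j=1}^d s_j(p, a_j) for all p ∈ J and all (a_1, …, a_d) ∈ A_1 × ⋯ × A_d, and (ii) ∑_{p ∈ J} s_j(p, a) ≤ M for every 1 ≤ j ≤ d and every a ∈ A_j. Then for all functions f_j : A_j → ℝ_{≥0}, 1 ≤ j ≤ d, one has ∑_{p ∈ J} S(p) · ( ∑_{(a_1,…,a_d) ∈ A_1 × ⋯ × A_d} δ(p, a_1, …, a_d) · f_1(a_1) ⋯ f_d(a_d) )^{1/d} ≤ C^{1/d} · M · ∏_{j=1}^d ( ∑_{a ∈ A_j} f_j(a) )^{1/d}. -/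
open Finset Real

lemma holder_d_aux (d : ℕ) (hd : 1 ≤ d) (J : Type) [Fintype J]
    (g : Fin d → J → ℝ) (hg : ∀ j p, 0 ≤ g j p) :
    ∑ p, ∏ j, (g j p) ^ ((d : ℝ)⁻¹) ≤ ∏ j, (∑ p, g j p) ^ ((d : ℝ)⁻¹) := by
  have hd' : (0 : ℝ) < d := by positivity
  by_cases hzero : ∃ j, ∑ p, g j p = 0
  · obtain ⟨j0, hj0⟩ := hzero
    have hg0 : ∀ p, g j0 p = 0 := fun p =>
      (Finset.sum_eq_zero_iff_of_nonneg (fun p _ => hg j0 p)).1 hj0 p (Finset.mem_univ p)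
    have hz : ∀ p : J, ∏ j, (g j p) ^ ((d : ℝ)⁻¹) = 0 := by
      intro p
      apply Finset.prod_eq_zero (Finset.mem_univ j0)
      rw [hg0 p, Real.zero_rpow (by positivity)]
    rw [Finset.sum_eq_zero fun p _ => hz p]
    apply Finset.prod_nonneg
    intro j _
    exact Real.rpow_nonneg (Finset.sum_nonneg fun p _ => hg j p) _
  · push_neg at hzero
    set B : Fin d → ℝ := fun j => ∑ p, g j p with hB
    have hBpos : ∀ j, 0 < B j := fun j =>
      lt_of_le_of_ne (Finset.sum_nonneg fun p _ => hg j p) (Ne.symm (hzero j))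
    have key : ∀ p : J, ∏ j, (g j p / B j) ^ ((d : ℝ)⁻¹) ≤ ∑ j, (d : ℝ)⁻¹ * (g j p / B j) := by
      intro p
      exact Real.geom_mean_le_arith_mean_weighted Finset.univ (fun _ => (d : ℝ)⁻¹)
        (fun j => g j p / B j) (fun j _ => by positivity)
        (by simp [Finset.card_univ]; field_simp)
        (fun j _ => div_nonneg (hg j p) (hBpos j).le)
    have hsum : ∑ p, ∑ j, (d : ℝ)⁻¹ * (g j p / B j) = 1 := by
      rw [Finset.sum_comm]
      have : ∀ j : Fin d, ∑ p, (d : ℝ)⁻¹ * (g j p / B j) = (d : ℝ)⁻¹ := by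
        intro j
        rw [← Finset.mul_sum, ← Finset.sum_div,
          show (∑ p, g j p) = B j from rfl, div_self (hBpos j).ne', mul_one]
      rw [Finset.sum_congr rfl fun j _ => this j]
      simp [Finset.card_univ]
      field_simp
    have hdiv : ∀ p : J, ∏ j, (g j p / B j) ^ ((d : ℝ)⁻¹)
        = (∏ j, (g j p) ^ ((d : ℝ)⁻¹)) / ∏ j, (B j) ^ ((d : ℝ)⁻¹) := by
      intro p
      rw [← Finset.prod_div_distrib]
      exact Finset.prod_congr rfl fun j _ => Real.div_rpow (hg j p) (hBpos j).le _
    have hprodpos : 0 < ∏ j, (B j) ^ ((d : ℝ)⁻¹) :=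
      Finset.prod_pos fun j _ => Real.rpow_pos_of_pos (hBpos j) _
    calc ∑ p, ∏ j, (g j p) ^ ((d : ℝ)⁻¹)
        = (∑ p, ∏ j, (g j p / B j) ^ ((d : ℝ)⁻¹)) * ∏ j, (B j) ^ ((d : ℝ)⁻¹) := by
          rw [Finset.sum_congr rfl fun p _ => hdiv p, ← Finset.sum_div,
            div_mul_cancel₀ _ hprodpos.ne']
      _ ≤ (∑ p, ∑ j, (d : ℝ)⁻¹ * (g j p / B j)) * ∏ j, (B j) ^ ((d : ℝ)⁻¹) := by
          apply mul_le_mul_of_nonneg_right (Finset.sum_le_sum fun p _ => key p) hprodpos.le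
      _ = ∏ j, (B j) ^ ((d : ℝ)⁻¹) := by rw [hsum, one_mul]

/-- **Abstract factorisation-to-boundedness scheme.**
Let `d ≥ 1`, let `J, A 0, …, A (d-1)` be finite sets, `S : J → ℝ≥0`,
`δ : J × ∏ A j → {0,1}`, and `s j : J × A j → ℝ≥0`. If
(i) `δ p a * S p ^ d ≤ C * ∏ j, s j p (a j)` for all `p` and `a`, and
(ii) `∑ p, s j p a ≤ M` for every `j` and `a ∈ A j`, then for all `f j : A j → ℝ≥0`,
`∑ p, S p * (∑ a, δ p a * ∏ j, f j (a j)) ^ (1/d) ≤ C ^ (1/d) * M * ∏ j, (∑ a, f j a) ^ (1/d)`. -/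
theorem abstract_factorisation_boundedness (d : ℕ) (hd : 1 ≤ d)
    (J : Type) [Fintype J] (A : Fin d → Type) [∀ j, Fintype (A j)]
    (S : J → ℝ) (hS : ∀ p, 0 ≤ S p)
    (δ : J → ((j : Fin d) → A j) → ℝ)
    (hδ : ∀ p a, δ p a = 0 ∨ δ p a = 1)
    (s : (j : Fin d) → J → A j → ℝ) (hs : ∀ j p a, 0 ≤ s j p a)
    (C M : ℝ) (hC : 0 ≤ C) (hM : 0 ≤ M)
    (h1 : ∀ (p : J) (a : (j : Fin d) → A j), δ p a * S p ^ d ≤ C * ∏ j, s j p (a j))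
    (h2 : ∀ (j : Fin d) (a : A j), (∑ p, s j p a) ≤ M)
    (f : (j : Fin d) → A j → ℝ) (hf : ∀ j a, 0 ≤ f j a) :
    (∑ p, S p * (∑ a : (j : Fin d) → A j, δ p a * ∏ j, f j (a j)) ^ ((d : ℝ)⁻¹))
      ≤ C ^ ((d : ℝ)⁻¹) * M * ∏ j, (∑ a, f j a) ^ ((d : ℝ)⁻¹) := by
  have hd' : (0 : ℝ) < d := by positivity
  set T : Fin d → J → ℝ := fun j p => ∑ a, s j p a * f j a with hT
  have hTnn : ∀ j p, 0 ≤ T j p := fun j p =>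
    Finset.sum_nonneg fun a _ => mul_nonneg (hs j p a) (hf j a)
  have hXnn : ∀ p, (0:ℝ) ≤ ∑ a : (j : Fin d) → A j, δ p a * ∏ j, f j (a j) := by
    intro p
    apply Finset.sum_nonneg
    intro a _
    apply mul_nonneg (by rcases hδ p a with h | h <;> simp [h])
      (Finset.prod_nonneg fun j _ => hf j (a j))
  -- pointwise bound
  have pointwise : ∀ p : J,
      S p * (∑ a : (j : Fin d) → A j, δ p a * ∏ j, f j (a j)) ^ ((d : ℝ)⁻¹)
        ≤ C ^ ((d : ℝ)⁻¹) * ∏ j, (T j p) ^ ((d : ℝ)⁻¹) := by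
    intro p
    have hpow : S p ^ d * (∑ a : (j : Fin d) → A j, δ p a * ∏ j, f j (a j))
        ≤ C * ∏ j, T j p := by
      rw [Finset.mul_sum]
      have expand : C * ∏ j, T j p
          = ∑ a : (j : Fin d) → A j, C * ∏ j, (s j p (a j) * f j (a j)) := by
        rw [← Finset.mul_sum]
        congr 1
        rw [Finset.prod_univ_sum]
        simp [Fintype.piFinset_univ]
      rw [expand]
      apply Finset.sum_le_sum
      intro a _
      calc S p ^ d * (δ p a * ∏ j, f j (a j))
          = (δ p a * S p ^ d) * ∏ j, f j (a j) := by ring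
        _ ≤ (C * ∏ j, s j p (a j)) * ∏ j, f j (a j) :=
            mul_le_mul_of_nonneg_right (h1 p a)
              (Finset.prod_nonneg fun j _ => hf j (a j))
        _ = C * ∏ j, (s j p (a j) * f j (a j)) := by
            rw [Finset.prod_mul_distrib]; ring
    have lhs_eq : S p * (∑ a : (j : Fin d) → A j, δ p a * ∏ j, f j (a j)) ^ ((d : ℝ)⁻¹)
        = (S p ^ d * ∑ a : (j : Fin d) → A j, δ p a * ∏ j, f j (a j)) ^ ((d : ℝ)⁻¹) := by
      rw [Real.mul_rpow (pow_nonneg (hS p) d) (hXnn p)]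
      congr 1
      rw [← Real.rpow_natCast (S p) d, ← Real.rpow_mul (hS p),
        mul_inv_cancel₀ hd'.ne', Real.rpow_one]
    rw [lhs_eq]
    calc (S p ^ d * ∑ a : (j : Fin d) → A j, δ p a * ∏ j, f j (a j)) ^ ((d : ℝ)⁻¹)
        ≤ (C * ∏ j, T j p) ^ ((d : ℝ)⁻¹) := by
          apply Real.rpow_le_rpow (mul_nonneg (pow_nonneg (hS p) d) (hXnn p)) hpow (by positivity)
      _ = C ^ ((d : ℝ)⁻¹) * ∏ j, (T j p) ^ ((d : ℝ)⁻¹) := by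
          rw [Real.mul_rpow hC (Finset.prod_nonneg fun j _ => hTnn j p),
            ← Real.finset_prod_rpow _ _ (fun j _ => hTnn j p)]
  calc (∑ p, S p * (∑ a : (j : Fin d) → A j, δ p a * ∏ j, f j (a j)) ^ ((d : ℝ)⁻¹))
      ≤ ∑ p, C ^ ((d : ℝ)⁻¹) * ∏ j, (T j p) ^ ((d : ℝ)⁻¹) :=
        Finset.sum_le_sum fun p _ => pointwise p
    _ = C ^ ((d : ℝ)⁻¹) * ∑ p, ∏ j, (T j p) ^ ((d : ℝ)⁻¹) := by rw [← Finset.mul_sum]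
    _ ≤ C ^ ((d : ℝ)⁻¹) * ∏ j, (∑ p, T j p) ^ ((d : ℝ)⁻¹) := by
        apply mul_le_mul_of_nonneg_left
          (holder_d_aux d hd J T hTnn) (Real.rpow_nonneg hC _)
    _ ≤ C ^ ((d : ℝ)⁻¹) * ∏ j, (M * ∑ a, f j a) ^ ((d : ℝ)⁻¹) := by
        apply mul_le_mul_of_nonneg_left _ (Real.rpow_nonneg hC _)
        apply Finset.prod_le_prod (fun j _ => Real.rpow_nonneg (Finset.sum_nonneg fun p _ => hTnn j p) _)
        intro j _
        apply Real.rpow_le_rpow (Finset.sum_nonneg fun p _ => hTnn j p) _ (by positivity)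
        calc ∑ p, T j p = ∑ a, (∑ p, s j p a) * f j a := by
              rw [Finset.sum_comm]
              exact Finset.sum_congr rfl fun a _ => by rw [Finset.sum_mul]
          _ ≤ ∑ a, M * f j a :=
              Finset.sum_le_sum fun a _ => mul_le_mul_of_nonneg_right (h2 j a) (hf j a)
          _ = M * ∑ a, f j a := by rw [← Finset.mul_sum]
    _ = C ^ ((d : ℝ)⁻¹) * M * ∏ j, (∑ a, f j a) ^ ((d : ℝ)⁻¹) := by
        have : ∀ j : Fin d, (M * ∑ a, f j a) ^ ((d : ℝ)⁻¹)
            = M ^ ((d : ℝ)⁻¹) * (∑ a, f j a) ^ ((d : ℝ)⁻¹) := fun j =>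
          Real.mul_rpow hM (Finset.sum_nonneg fun a _ => hf j a)
        rw [Finset.prod_congr rfl fun j _ => this j, Finset.prod_mul_distrib,
          Finset.prod_const, Finset.card_univ, Fintype.card_fin,
          ← Real.rpow_natCast (M ^ ((d : ℝ)⁻¹)) d, ← Real.rpow_mul hM,
          inv_mul_cancel₀ hd'.ne', Real.rpow_one]
        ring
end

section
/- Let d, n and k_1, …, k_d be positive integers with k_1 + ⋯ + k_d = n, let F be an infinite field, and let E ⊆ F^n be a finite set. Then there exist finite sets Π_1, …, Π_d of affine k_1-, …, k_d-planes in F^n respectively, such that for every p ∈ E and every tuple of linear subspaces V_1, …, V_d of F^n with dim V_j = k_j and V_1 + ⋯ + V_d = F^n, there exist planes π_j ∈ Π_j (1 ≤ j ≤ d) satisfying π_j ∩ E = (p + V_j) ∩ E for each j and e(π_1) + ⋯ + e(π_d) = F^n. -/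
/-!
Each trace `(p + V j) ∩ E` is a subset of the finite set `E`, so only finitely many tuples of
traces occur. Fixing for each of them one admissible pair `(p, V)` producing it, the planes
`p + V j` of these finitely many representatives realise every tuple that occurs, and their
directions `V j` span.
-/

open Module

theorem Set.Finite.exists_finite_subset_image_eq {α β : Type*} {f : α → β} {s : Set α}
    (h : (f '' s).Finite) : ∃ t ⊆ s, t.Finite ∧ f '' t = f '' s := by
  obtain ⟨t, hts, hbij⟩ := Set.exists_subset_bijOn s f
  exact ⟨t, hts, .of_finite_image (hbij.image_eq ▸ h) hbij.injOn, hbij.image_eq⟩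

theorem Set.Finite.finite_range_inter {ι α X : Type*} [Finite ι] {E : Set α} (hE : E.Finite)
    (g : X → ι → Set α) : (Set.range fun x i => g x i ∩ E).Finite :=
  (Set.Finite.pi fun _ => hE.finite_subsets).subset <| by
    rintro _ ⟨x, rfl⟩ i -
    exact Set.inter_subset_right

theorem exists_finite_plane_families_general
    (d n : ℕ) (k : Fin d → ℕ)
    (F : Type) [Field F]
    (E : Set (Fin n → F)) (hE : E.Finite) :
    ∃ P : (j : Fin d) → Finset (AffineSubspace F (Fin n → F)),
      (∀ j, ∀ π ∈ P j,
        (π : Set (Fin n → F)).Nonempty ∧ Module.finrank F π.direction = k j) ∧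
      ∀ p ∈ E, ∀ V : (j : Fin d) → Submodule F (Fin n → F),
        (∀ j, Module.finrank F (V j) = k j) → (⨆ j, V j) = ⊤ →
        ∃ π : (j : Fin d) → AffineSubspace F (Fin n → F),
          (∀ j, π j ∈ P j) ∧
          (∀ j, (π j : Set (Fin n → F)) ∩ E
            = ((AffineSubspace.mk' p (V j) : AffineSubspace F (Fin n → F)) : Set (Fin n → F)) ∩ E) ∧
          (⨆ j, (π j).direction) = ⊤ := by
  classical
  let admissible : Set ((Fin n → F) × (Fin d → Submodule F (Fin n → F))) :=
    {x | (∀ j, finrank F (x.2 j) = k j) ∧ ⨆ j, x.2 j = ⊤}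
  let plane (x : (Fin n → F) × (Fin d → Submodule F (Fin n → F))) (j : Fin d) :=
    AffineSubspace.mk' x.1 (x.2 j)
  let traces x j := (plane x j : Set (Fin n → F)) ∩ E
  obtain ⟨T, hT, hT_finite, hT_traces⟩ :
      ∃ T ⊆ admissible, T.Finite ∧ traces '' T = traces '' admissible :=
    ((hE.finite_range_inter fun x j => plane x j).subset
      (Set.image_subset_range _ _)).exists_finite_subset_image_eq
  refine ⟨fun j => hT_finite.toFinset.image (plane · j), ?_, ?_⟩
  · simp only [Finset.mem_image, Set.Finite.mem_toFinset]
    rintro j _ ⟨x, hx, rfl⟩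
    exact ⟨⟨x.1, AffineSubspace.self_mem_mk' _ _⟩,
      (AffineSubspace.direction_mk' x.1 (x.2 j)).symm ▸ (hT hx).1 j⟩
  · intro p _ V hV hV_top
    obtain ⟨y, hy, hy_traces⟩ : traces (p, V) ∈ traces '' T :=
      hT_traces ▸ ⟨(p, V), ⟨hV, hV_top⟩, rfl⟩
    refine ⟨plane y, fun j => Finset.mem_image_of_mem _ (hT_finite.mem_toFinset.2 hy),
      congr_fun hy_traces, ?_⟩
    simpa only [plane, AffineSubspace.direction_mk'] using (hT hy).2

/-- Over an infinite field `F`, for any finite set `E ⊆ Fⁿ` and positive integers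
`k 0, …, k (d-1)` with `∑ j, k j = n`, there exist finite sets `P j` of affine `k j`-planes in
`Fⁿ` such that for every `p ∈ E` and every tuple of linear subspaces `V j` with
`dim (V j) = k j` and `V 0 + ⋯ + V (d-1) = Fⁿ`, there are planes `π j ∈ P j` with
`π j ∩ E = (p + V j) ∩ E` for each `j` and whose directions together span `Fⁿ`. -/
theorem exists_finite_plane_families
    (d n : ℕ) (hd : 0 < d) (hn : 0 < n) (k : Fin d → ℕ) (hk : ∀ j, 0 < k j)
    (hsum : (∑ j, k j) = n)
    (F : Type) [Field F] [Infinite F]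
    (E : Set (Fin n → F)) (hE : E.Finite) :
    ∃ P : (j : Fin d) → Finset (AffineSubspace F (Fin n → F)),
      (∀ j, ∀ π ∈ P j,
        (π : Set (Fin n → F)).Nonempty ∧ Module.finrank F π.direction = k j) ∧
      ∀ p ∈ E, ∀ V : (j : Fin d) → Submodule F (Fin n → F),
        (∀ j, Module.finrank F (V j) = k j) → (⨆ j, V j) = ⊤ →
        ∃ π : (j : Fin d) → AffineSubspace F (Fin n → F),
          (∀ j, π j ∈ P j) ∧
          (∀ j, (π j : Set (Fin n → F)) ∩ E
            = ((AffineSubspace.mk' p (V j) : AffineSubspace F (Fin n → F)) : Set (Fin n → F)) ∩ E) ∧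
          (⨆ j, (π j).direction) = ⊤ :=
  exists_finite_plane_families_general d n k F E hE
end
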